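/- arXiv:1305.0069 — 8 statements merged into one kernel-verified Lean document; each statement's English description precedes it below -/
import Mathlib

section
/- A monotone block move on a permutation decreases the number of breakpoints by at most three. -/
/-- The identity permutation of `{1,…,n}` as a list `[1, 2, …, n]`. -/
def idL (n : ℕ) : List ℕ := (List.range n).map (· + 1)

/-- `l` is a permutation of `{1,…,n}` (written as a list). -/
def IsPermList (n : ℕ) (l : List ℕ) : Prop := l.Perm (idL n)

/-- The extension of `π` by `π₀ = 0` and `π_{n+1} = n+1`. -/
def ext (n : ℕ) (l : List ℕ) : List ℕ := 0 :: (l ++ [n + 1])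

/-- Number of adjacent pairs of the extended permutation satisfying `p`. -/
def adjCount (p : ℕ → ℕ → Bool) (n : ℕ) (l : List ℕ) : ℕ :=
  ((ext n l).zip (ext n l).tail).countP (fun q => p q.1 q.2)

/-- Number of breakpoints: adjacent pairs with `π_{i+1} ≠ π_i + 1`. -/
def bp (n : ℕ) (l : List ℕ) : ℕ := adjCount (fun a b => b ≠ a + 1) n l

/-- Number of descents: adjacent pairs with `π_i > π_{i+1}`. -/
def des (n : ℕ) (l : List ℕ) : ℕ := adjCount (fun a b => b < a) n l

/-- Number of gaps: adjacent pairs with `π_{i+1} > π_i + 1`. -/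
def gap (n : ℕ) (l : List ℕ) : ℕ := adjCount (fun a b => a + 1 < b) n l

/-- Number of inverse descents: pairs of positions `i < j` with `π_i = π_j + 1`. -/
def invDes (l : List ℕ) : ℕ :=
  (Finset.univ.filter (fun p : Fin l.length × Fin l.length =>
    (p.1 : ℕ) < (p.2 : ℕ) ∧ l.get p.1 = l.get p.2 + 1)).card

/-- Number of inverse gaps: pairs of positions with `i > j + 1` and `π_i = π_j + 1`. -/
def invGap (l : List ℕ) : ℕ :=
  (Finset.univ.filter (fun p : Fin l.length × Fin l.length =>
    (p.2 : ℕ) + 1 < (p.1 : ℕ) ∧ l.get p.1 = l.get p.2 + 1)).card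

/-- `l'` is obtained from `l` by a block move: exchanging two nonempty
consecutive blocks `B` and `C`. -/
def IsBlockMove (l l' : List ℕ) : Prop :=
  ∃ A B C D : List ℕ, B ≠ [] ∧ C ≠ [] ∧ l = A ++ B ++ C ++ D ∧ l' = A ++ C ++ B ++ D

/-- A monotone block move: every element of the first (left) exchanged block
exceeds every element of the second (right) exchanged block. -/
def IsMonotoneBlockMove (l l' : List ℕ) : Prop :=
  ∃ A B C D : List ℕ, B ≠ [] ∧ C ≠ [] ∧ (∀ x ∈ B, ∀ y ∈ C, y < x) ∧
    l = A ++ B ++ C ++ D ∧ l' = A ++ C ++ B ++ D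

/-- A single-element block move: one of the two exchanged blocks has size one. -/
def IsSingleBlockMove (l l' : List ℕ) : Prop :=
  ∃ A B C D : List ℕ, B ≠ [] ∧ C ≠ [] ∧ (B.length = 1 ∨ C.length = 1) ∧
    l = A ++ B ++ C ++ D ∧ l' = A ++ C ++ B ++ D

/-- A monotone single-element block move. -/
def IsMonoSingleBlockMove (l l' : List ℕ) : Prop :=
  ∃ A B C D : List ℕ, B ≠ [] ∧ C ≠ [] ∧ (B.length = 1 ∨ C.length = 1) ∧
    (∀ x ∈ B, ∀ y ∈ C, y < x) ∧ l = A ++ B ++ C ++ D ∧ l' = A ++ C ++ B ++ D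

/-- `l` can be transformed into `target` by `t` moves of type `R`. -/
def SortsIn (R : List ℕ → List ℕ → Prop) (l target : List ℕ) (t : ℕ) : Prop :=
  ∃ c : ℕ → List ℕ, c 0 = l ∧ c t = target ∧ ∀ i < t, R (c i) (c (i + 1))

/-- Length of the longest increasing subsequence of `l`. -/
def lis (l : List ℕ) : ℕ :=
  ((l.sublists.filter (fun s => decide (List.IsChain (· < ·) s))).map List.length).foldr max 0

/-!
Cutting the extended permutation `0 π₁ … πₙ (n+1)` into the four segments `0 A`, `B`, `C`,
`D (n+1)` of a block move, every adjacent pair lies inside a segment except the three pairs at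
the cuts. Exchanging `B` and `C` preserves the pairs inside the segments, so any count of
adjacent pairs changes by at most three.
-/

namespace List

variable {α : Type*}

theorem consecutivePairs_append_of_ne_nil {u v : List α} (hu : u ≠ []) (hv : v ≠ []) :
    (u ++ v).consecutivePairs =
      u.consecutivePairs ++ (u.getLast hu, v.head hv) :: v.consecutivePairs := by
  induction u with
  | nil => exact absurd rfl hu
  | cons a u ih =>
    cases u with
    | nil => cases v with
      | nil => exact absurd rfl hv
      | cons b t => rfl
    | cons b t =>
      simp only [consecutivePairs, cons_append, tail_cons, zip_cons_cons] at ih ⊢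
      rw [ih (cons_ne_nil b t)]
      rfl

variable (p : α × α → Bool) (u v : List α)

theorem countP_consecutivePairs_append_le_add :
    (u ++ v).consecutivePairs.countP p ≤
      u.consecutivePairs.countP p + v.consecutivePairs.countP p + 1 := by
  rcases eq_or_ne u [] with rfl | hu
  · simp
  rcases eq_or_ne v [] with rfl | hv
  · simp
  rw [consecutivePairs_append_of_ne_nil hu hv, countP_append, countP_cons]
  split <;> omega

theorem countP_consecutivePairs_add_le_append :
    u.consecutivePairs.countP p + v.consecutivePairs.countP p ≤
      (u ++ v).consecutivePairs.countP p := by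
  rcases eq_or_ne u [] with rfl | hu
  · simp
  rcases eq_or_ne v [] with rfl | hv
  · simp
  rw [consecutivePairs_append_of_ne_nil hu hv, countP_append, countP_cons]
  omega

end List

theorem adjCount_block_move_le (p : ℕ → ℕ → Bool) (n : ℕ) (A B C D : List ℕ) :
    adjCount p n (A ++ B ++ C ++ D) ≤ adjCount p n (A ++ C ++ B ++ D) + 3 := by
  let s : List ℕ → ℕ := fun l => l.consecutivePairs.countP fun q => p q.1 q.2
  have cut : ∀ u v, s (u ++ v) ≤ s u + s v + 1 :=
    List.countP_consecutivePairs_append_le_add _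
  have glue : ∀ u v, s u + s v ≤ s (u ++ v) :=
    List.countP_consecutivePairs_add_le_append _
  have hext : ∀ B C : List ℕ,
      adjCount p n (A ++ B ++ C ++ D) = s ((0 :: A) ++ B ++ C ++ (D ++ [n + 1])) := by
    intro B C
    simp [adjCount, ext, s, List.consecutivePairs]
  rw [hext, hext]
  have := cut ((0 :: A) ++ B ++ C) (D ++ [n + 1])
  have := cut ((0 :: A) ++ B) C
  have := cut (0 :: A) B
  have := glue ((0 :: A) ++ C ++ B) (D ++ [n + 1])
  have := glue ((0 :: A) ++ C) B
  have := glue (0 :: A) C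
  omega

theorem monotone_block_move_bp_general (n : ℕ) (l l' : List ℕ)
    (hmove : IsMonotoneBlockMove l l') :
    bp n l ≤ bp n l' + 3 := by
  obtain ⟨A, B, C, D, -, -, -, rfl, rfl⟩ := hmove
  exact adjCount_block_move_le _ n A B C D

/-- A monotone block move decreases the number of breakpoints by at most three. -/
theorem monotone_block_move_bp (n : ℕ) (l l' : List ℕ)
    (hl : IsPermList n l) (hmove : IsMonotoneBlockMove l l') :
    bp n l ≤ bp n l' + 3 :=
  monotone_block_move_bp_general n l l' hmove
end

section
/- A monotone block move on a permutation decreases the number of descents by at most one. -/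
/-!
Cut the extended permutation `0 A B C D (n+1)` at the three junctions of the move. The adjacent
pairs inside `0 A`, `B`, `C`, `D (n+1)` are the same before and after the move, so only the
junctions `(a, b₁), (b_last, c₁), (c_last, d)` are replaced by `(a, c₁), (c_last, b₁), (b_last, d)`.
Monotonicity gives `c₁ < b₁` and `c_last < b_last`, so a descent at `(a, b₁)` or `(c_last, d)`
survives as one at `(a, c₁)` or `(b_last, d)`; only the descent `(b_last, c₁)` can be lost.
-/

namespace List

variable {α : Type*} (p : α → α → Bool)

def countAdj (l : List α) : ℕ :=
  (l.zip l.tail).countP (fun q => p q.1 q.2)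

theorem countAdj_cons_cons (x y : α) (l : List α) :
    countAdj p (x :: y :: l) = countAdj p (y :: l) + (p x y).toNat := by
  simp only [countAdj, tail_cons, zip_cons_cons, countP_cons]
  cases p x y <;> rfl

theorem countAdj_append :
    ∀ (X Y : List α) (hX : X ≠ []) (hY : Y ≠ []),
      countAdj p (X ++ Y) = countAdj p X + countAdj p Y + (p (X.getLast hX) (Y.head hY)).toNat
  | [x], y :: ys, _, _ => by
    rw [singleton_append, countAdj_cons_cons]
    simp [countAdj]
  | x :: x' :: xs, Y, _, hY => by
    rw [cons_append, cons_append, countAdj_cons_cons, ← cons_append,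
      countAdj_append (x' :: xs) Y (cons_ne_nil _ _) hY, countAdj_cons_cons, getLast_cons_cons]
    omega

theorem countAdj_swap_blocks {A B C D : List α}
    (hA : A ≠ []) (hB : B ≠ []) (hC : C ≠ []) (hD : D ≠ []) :
    countAdj p (A ++ B ++ C ++ D) + (p (A.getLast hA) (C.head hC)).toNat
        + (p (C.getLast hC) (B.head hB)).toNat + (p (B.getLast hB) (D.head hD)).toNat
      = countAdj p (A ++ C ++ B ++ D) + (p (A.getLast hA) (B.head hB)).toNat
        + (p (B.getLast hB) (C.head hC)).toNat + (p (C.getLast hC) (D.head hD)).toNat := by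
  have hsplit (X Y Z : List α) (hX : X ≠ []) (hY : Y ≠ []) (hZ : Z ≠ []) :
      countAdj p (A ++ X ++ Y ++ Z) = countAdj p A + countAdj p X + countAdj p Y + countAdj p Z
        + (p (A.getLast hA) (X.head hX)).toNat + (p (X.getLast hX) (Y.head hY)).toNat
        + (p (Y.getLast hY) (Z.head hZ)).toNat := by
    simp only [append_assoc]
    rw [countAdj_append p A _ hA (by simp [hX]), countAdj_append p X _ hX (by simp [hY]),
      countAdj_append p Y _ hY hZ, head_append_of_ne_nil hX, head_append_of_ne_nil hY]
    omega
  rw [hsplit B C D hB hC hD, hsplit C B D hC hB hD]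
  omega

end List

theorem adjCount_eq_countAdj (p : ℕ → ℕ → Bool) (n : ℕ) (l : List ℕ) :
    adjCount p n l = (ext n l).countAdj p :=
  rfl

theorem monotone_block_move_des_general (n : ℕ) (l l' : List ℕ)
    (hmove : IsMonotoneBlockMove l l') :
    des n l ≤ des n l' + 1 := by
  obtain ⟨A, B, C, D, hB, hC, hBC, rfl, rfl⟩ := hmove
  have hswap := List.countAdj_swap_blocks (fun a b => decide (b < a))
    (A := 0 :: A) (D := D ++ [n + 1]) (List.cons_ne_nil _ _) hB hC (by simp)
  have hfirst : C.head hC < B.head hB := hBC _ (B.head_mem hB) _ (C.head_mem hC)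
  have hlast : C.getLast hC < B.getLast hB := hBC _ (B.getLast_mem hB) _ (C.getLast_mem hC)
  simp only [List.append_assoc, List.cons_append, Bool.toNat, Bool.cond_decide] at hswap
  simp only [des, adjCount_eq_countAdj, ext, List.append_assoc]
  split_ifs at hswap <;> omega

/-- A monotone block move decreases the number of descents by at most one. -/
theorem monotone_block_move_des (n : ℕ) (l l' : List ℕ)
    (hl : IsPermList n l) (hmove : IsMonotoneBlockMove l l') :
    des n l ≤ des n l' + 1 :=
  monotone_block_move_des_general n l l' hmove
end

section
/- A monotone block move on a permutation decreases the number of gaps by at most two. -/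
/-!
The gaps of `π` are counted over the consecutive pairs of its extension `0 π (n+1)`. Write the
extension as `X B C Y`, with the exchanged blocks `B`, `C` and nonempty `X = 0 A`, `Y = D (n+1)`.
Exchanging `B` and `C` keeps every consecutive pair inside `X`, `B`, `C`, `Y` and replaces the three
pairs at the block boundaries by three new ones. For a monotone move the boundary pair
`(last B, head C)` is a descent, hence not a gap, so at most two gaps are lost.
-/

namespace List
variable {α : Type*}

theorem consecutivePairs_append {l₁ l₂ : List α} (h₁ : l₁ ≠ []) (h₂ : l₂ ≠ []) :
    (l₁ ++ l₂).consecutivePairs =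
      l₁.consecutivePairs ++ (l₁.getLast h₁, l₂.head h₂) :: l₂.consecutivePairs := by
  induction l₁ with
  | nil => exact absurd rfl h₁
  | cons a t ih =>
    obtain ⟨b, l₂, rfl⟩ := exists_cons_of_ne_nil h₂
    rcases t with _ | ⟨c, t⟩
    · rfl
    · simpa [consecutivePairs] using ih (cons_ne_nil c t)

theorem countP_consecutivePairs_swap_le {p : α × α → Bool} {X B C Y : List α}
    (hX : X ≠ []) (hB : B ≠ []) (hC : C ≠ []) (hY : Y ≠ [])
    (hBC : p (B.getLast hB, C.head hC) = false) :
    (X ++ B ++ C ++ Y).consecutivePairs.countP p ≤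
      (X ++ C ++ B ++ Y).consecutivePairs.countP p + 2 := by
  simp only [append_assoc]
  rw [consecutivePairs_append hX (by simp [hB]), consecutivePairs_append hB (by simp [hC]),
    consecutivePairs_append hC hY, consecutivePairs_append hX (by simp [hC]),
    consecutivePairs_append hC (by simp [hB]), consecutivePairs_append hB hY]
  simp only [head_append_of_ne_nil hB, head_append_of_ne_nil hC, countP_append, countP_cons, hBC,
    Bool.false_eq_true, if_false]
  split_ifs <;> omega

end List

theorem monotone_block_move_gap_general (n : ℕ) (l l' : List ℕ)
    (hmove : IsMonotoneBlockMove l l') :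
    gap n l ≤ gap n l' + 2 := by
  obtain ⟨A, B, C, D, hB, hC, hmono, rfl, rfl⟩ := hmove
  have hext (U V : List ℕ) : ext n (A ++ U ++ V ++ D) = 0 :: A ++ U ++ V ++ (D ++ [n + 1]) := by
    simp [ext]
  have hdescent : C.head hC < B.getLast hB := hmono _ (B.getLast_mem hB) _ (C.head_mem hC)
  unfold gap adjCount
  rw [hext B C, hext C B]
  exact List.countP_consecutivePairs_swap_le (List.cons_ne_nil _ _) hB hC (by simp)
    (by simp only [decide_eq_false_iff_not]; omega)

/-- A monotone block move decreases the number of gaps by at most two. -/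
theorem monotone_block_move_gap (n : ℕ) (l l' : List ℕ)
    (hl : IsPermList n l) (hmove : IsMonotoneBlockMove l l') :
    gap n l ≤ gap n l' + 2 :=
  monotone_block_move_gap_general n l l' hmove
end

section
/- A monotone block move on a permutation decreases the number of inverse descents by at most one. -/
/-!
Cutting a list as `x ++ y`, its inverse descents are those inside `x`, those inside `y`, and the
cross pairs `a ∈ x`, `b ∈ y` with `a = b + 1`. Exchanging adjacent blocks `B`, `C` therefore only
trades the cross pairs of `(B, C)` for those of `(C, B)`. In a monotone move `(C, B)` has none, and
since the entries are distinct and `B > C`, the only possible cross pair of `(B, C)` is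
`(min B, max C)`: at most one inverse descent is lost.
-/

def crossCount (x y : List ℕ) : ℕ :=
  (x.map fun a => y.countP fun b => a == b + 1).sum

lemma crossCount_cons_left (a : ℕ) (x y : List ℕ) :
    crossCount (a :: x) y = y.countP (fun b => a == b + 1) + crossCount x y := by
  simp [crossCount]

lemma crossCount_append_left (x y z : List ℕ) :
    crossCount (x ++ y) z = crossCount x z + crossCount y z := by
  simp [crossCount]

lemma crossCount_eq_zero {x y : List ℕ} (h : ∀ a ∈ x, ∀ b ∈ y, a ≠ b + 1) :
    crossCount x y = 0 := by
  simpa [crossCount, List.sum_eq_zero_iff, List.countP_eq_zero] using h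

lemma countP_eq_sum_get (a : ℕ) (t : List ℕ) :
    t.countP (fun b => a == b + 1) = ∑ j : Fin t.length, if a = t.get j + 1 then 1 else 0 := by
  induction t with
  | nil => simp
  | cons b t ih =>
    change _ = ∑ j : Fin (t.length + 1), if a = (b :: t).get j + 1 then 1 else 0
    rw [List.countP_cons, Fin.sum_univ_succ, ih]
    by_cases h : a = b + 1 <;> simp [h, add_comm]

lemma invDes_cons (a : ℕ) (t : List ℕ) :
    invDes (a :: t) = t.countP (fun b => a == b + 1) + invDes t := by
  rw [invDes, invDes, Finset.card_filter, Finset.card_filter, Fintype.sum_prod_type,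
    Fintype.sum_prod_type, countP_eq_sum_get]
  show (∑ i : Fin (t.length + 1), ∑ j : Fin (t.length + 1),
      if (i : ℕ) < (j : ℕ) ∧ (a :: t).get i = (a :: t).get j + 1 then 1 else 0) = _
  rw [Fin.sum_univ_succ]
  congr 1
  · rw [Fin.sum_univ_succ]
    simp
  · refine Finset.sum_congr rfl fun i _ => ?_
    rw [Fin.sum_univ_succ]
    simp

lemma invDes_append (x y : List ℕ) : invDes (x ++ y) = invDes x + invDes y + crossCount x y := by
  induction x with
  | nil => simp [invDes, crossCount]
  | cons a x ih =>
    rw [List.cons_append, invDes_cons, invDes_cons, ih, crossCount_cons_left, List.countP_append]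
    ring

lemma invDes_swap_blocks (A B C D : List ℕ) :
    invDes (A ++ B ++ C ++ D) + crossCount C B = invDes (A ++ C ++ B ++ D) + crossCount B C := by
  simp only [invDes_append, crossCount_append_left]
  ring

lemma countP_succ_eq_le_one (a : ℕ) {y : List ℕ} (hy : y.Nodup) :
    y.countP (fun b => a == b + 1) ≤ 1 := by
  calc y.countP (fun b => a == b + 1) ≤ y.count (a - 1) :=
        List.countP_mono_left fun b _ h => by simp at h ⊢; omega
    _ ≤ 1 := List.nodup_iff_count_le_one.1 hy _

lemma crossCount_le_one {B C : List ℕ} (hB : B.Nodup) (hC : C.Nodup)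
    (hmono : ∀ x ∈ B, ∀ y ∈ C, y < x) : crossCount B C ≤ 1 := by
  induction B with
  | nil => simp [crossCount]
  | cons b B ih =>
    rw [List.nodup_cons] at hB
    rw [crossCount_cons_left]
    by_cases h : ∃ c ∈ C, b = c + 1
    · obtain ⟨c, hc, rfl⟩ := h
      have hrest : crossCount B C = 0 := crossCount_eq_zero fun b' hb' c' hc' hbc' => by
        have h1 := hmono b' (by simp [hb']) c hc
        have h2 := hmono (c + 1) (by simp) c' hc'
        exact hB.1 (by convert hb' using 1; omega)
      have := countP_succ_eq_le_one (c + 1) hC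
      omega
    · have hzero : C.countP (fun b' => b == b' + 1) = 0 := by
        simpa [List.countP_eq_zero] using fun c hc hbc => h ⟨c, hc, hbc⟩
      rw [hzero, zero_add]
      exact ih hB.2 fun x hx => hmono x (by simp [hx])

lemma IsPermList.nodup {n : ℕ} {l : List ℕ} (hl : IsPermList n l) : l.Nodup :=
  hl.nodup_iff.2 <| (List.nodup_range).map fun _ _ => by omega

/-- A monotone block move decreases the number of inverse descents by at most one. -/
theorem monotone_block_move_invDes (n : ℕ) (l l' : List ℕ)
    (hl : IsPermList n l) (hmove : IsMonotoneBlockMove l l') :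
    invDes l ≤ invDes l' + 1 := by
  obtain ⟨A, B, C, D, -, -, hmono, rfl, rfl⟩ := hmove
  have hnd := hl.nodup
  simp only [List.append_assoc, List.nodup_append] at hnd
  obtain ⟨-, ⟨hBnd, ⟨hCnd, -⟩, -⟩, -⟩ := hnd
  have hCB : crossCount C B = 0 :=
    crossCount_eq_zero fun c hc b hb hcb => by have := hmono b hb c hc; omega
  have hBC : crossCount B C ≤ 1 := crossCount_le_one hBnd hCnd hmono
  have := invDes_swap_blocks A B C D
  omega
end

section
/- A monotone block move on a permutation decreases the number of inverse gaps by at most two. -/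
/-!
A block move only relocates entries: position `i` of `A ++ B ++ C ++ D` goes to position
`blockSwapIndex i` of `A ++ C ++ B ++ D`, injectively. An inverse gap at positions `j + 1 < i`
survives unless the new positions are no longer `j' + 1 < i'`. Checking the four blocks, that
happens only if `j` lies in `B` and `i` in `C`, which monotonicity forbids (`π_i < π_j` there,
while `π_i = π_j + 1`), or if the pair becomes adjacent across a block boundary, namely
(last of `A`, first of `C`) or (last of `B`, first of `D`). So at most two inverse gaps are lost.
-/

theorem invGap_le_add_card_of_injective {L L' : List ℕ} (σ : Fin L.length → Fin L'.length)
    (hσ : Function.Injective σ) (hget : ∀ i, L'.get (σ i) = L.get i) (E : Finset (ℕ × ℕ))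
    (hE : ∀ i j : Fin L.length, (j : ℕ) + 1 < i → L.get i = L.get j + 1 →
      ¬ (σ j : ℕ) + 1 < σ i → ((i : ℕ), (j : ℕ)) ∈ E) :
    invGap L ≤ invGap L' + E.card := by
  unfold invGap
  set S := Finset.univ.filter (fun p : Fin L.length × Fin L.length =>
    (p.2 : ℕ) + 1 < (p.1 : ℕ) ∧ L.get p.1 = L.get p.2 + 1)
  rw [← Finset.card_filter_add_card_filter_not (s := S)
    (p := fun p => (σ p.2 : ℕ) + 1 < σ p.1)]
  gcongr ?_ + ?_
  · refine Finset.card_le_card_of_injOn (fun p => (σ p.1, σ p.2)) ?_ ?_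
    · intro p hp
      simp only [S, Finset.coe_filter, Finset.mem_filter, Finset.mem_univ, true_and] at hp ⊢
      exact ⟨hp.2, by rw [hget, hget]; exact hp.1.2⟩
    · intro p _ q _ h
      simp only [Prod.mk.injEq] at h
      exact Prod.ext (hσ h.1) (hσ h.2)
  · refine Finset.card_le_card_of_injOn (fun p => ((p.1 : ℕ), (p.2 : ℕ))) ?_ ?_
    · intro p hp
      simp only [S, Finset.coe_filter, Finset.mem_filter, Finset.mem_univ, true_and] at hp
      exact hE p.1 p.2 hp.1.1 hp.1.2 hp.2
    · intro p _ q _ h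
      simp only [Prod.mk.injEq] at h
      exact Prod.ext (Fin.ext h.1) (Fin.ext h.2)

/-- The position in `A ++ C ++ B ++ D` of the entry at position `i` of `A ++ B ++ C ++ D`,
where `a`, `b`, `c` are the lengths of `A`, `B`, `C`. -/
def blockSwapIndex (a b c i : ℕ) : ℕ :=
  if i < a then i else if i < a + b then i + c else if i < a + b + c then i - b else i

theorem blockSwapIndex_injective (a b c : ℕ) : Function.Injective (blockSwapIndex a b c) := by
  intro i j h
  unfold blockSwapIndex at h
  split_ifs at h <;> omega

theorem blockSwapIndex_lt {a b c n i : ℕ} (habc : a + b + c ≤ n) (hi : i < n) :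
    blockSwapIndex a b c i < n := by
  unfold blockSwapIndex
  split_ifs <;> omega

theorem blockSwapIndex_add_one_lt {a b c i j : ℕ} (hji : j + 1 < i) :
    blockSwapIndex a b c j + 1 < blockSwapIndex a b c i ∨
      (a ≤ j ∧ j < a + b ∧ a + b ≤ i ∧ i < a + b + c) ∨
      (j + 1 = a ∧ i = a + b) ∨ (j + 1 = a + b ∧ i = a + b + c) := by
  unfold blockSwapIndex
  split_ifs <;> omega

section
variable {α : Type*} (A B C D : List α)

theorem blockSwapIndex_lt_length {i : ℕ} (hi : i < (A ++ B ++ C ++ D).length) :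
    blockSwapIndex A.length B.length C.length i < (A ++ C ++ B ++ D).length := by
  simp only [List.length_append] at hi ⊢
  exact blockSwapIndex_lt (by omega) (by omega)

theorem getElem_blockSwapIndex {i : ℕ} (hi : i < (A ++ B ++ C ++ D).length) :
    (A ++ C ++ B ++ D)[blockSwapIndex A.length B.length C.length i]'
      (blockSwapIndex_lt_length A B C D hi) = (A ++ B ++ C ++ D)[i] := by
  simp only [blockSwapIndex]
  split_ifs <;> simp only [List.getElem_append, List.length_append] <;> split_ifs <;>
    first | rfl | (exfalso; omega) | (congr 1; omega)

end

theorem getElem_append_mem_middle {α : Type*} (l₁ l₂ l₃ : List α) {i : ℕ}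
    (hi : i < (l₁ ++ l₂ ++ l₃).length) (h₁ : l₁.length ≤ i) (h₂ : i < l₁.length + l₂.length) :
    (l₁ ++ l₂ ++ l₃)[i] ∈ l₂ := by
  rw [List.getElem_append_left (by simpa using h₂), List.getElem_append_right h₁]
  exact List.getElem_mem _

theorem invGap_append_swap_le (A B C D : List ℕ) (hBC : ∀ x ∈ B, ∀ y ∈ C, y < x) :
    invGap (A ++ B ++ C ++ D) ≤ invGap (A ++ C ++ B ++ D) + 2 := by
  set a := A.length
  set b := B.length
  set c := C.length
  refine (invGap_le_add_card_of_injective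
    (fun i => ⟨blockSwapIndex a b c i, blockSwapIndex_lt_length A B C D i.isLt⟩)
    (fun i j h => Fin.ext (blockSwapIndex_injective a b c (Fin.mk.inj_iff.mp h)))
    (fun i => getElem_blockSwapIndex A B C D i.isLt)
    {(a + b, a - 1), (a + b + c, a + b - 1)} ?_).trans
    (Nat.add_le_add_left Finset.card_le_two _)
  intro i j hji hval hσ
  rcases blockSwapIndex_add_one_lt (a := a) (b := b) (c := c) hji with
    hgap | ⟨hj₁, hj₂, hi₁, hi₂⟩ | hAC | hBD
  · exact absurd hgap hσ
  · have hjB : (A ++ B ++ C ++ D)[(j : ℕ)] ∈ B := by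
      have := getElem_append_mem_middle A B (C ++ D) (i := j)
        (by simpa only [List.append_assoc] using j.isLt) hj₁ hj₂
      simpa only [List.append_assoc] using this
    have hiC : (A ++ B ++ C ++ D)[(i : ℕ)] ∈ C :=
      getElem_append_mem_middle (A ++ B) C D i.isLt (by simpa using hi₁) (by simpa using hi₂)
    have hlt := hBC _ hjB _ hiC
    simp only [List.get_eq_getElem] at hval
    omega
  all_goals simp only [Finset.mem_insert, Finset.mem_singleton, Prod.mk.injEq]; omega

theorem monotone_block_move_invGap_general (l l' : List ℕ)
    (hmove : IsMonotoneBlockMove l l') :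
    invGap l ≤ invGap l' + 2 := by
  obtain ⟨A, B, C, D, -, -, hBC, rfl, rfl⟩ := hmove
  exact invGap_append_swap_le A B C D hBC

/-- A monotone block move decreases the number of inverse gaps by at most two. -/
theorem monotone_block_move_invGap (n : ℕ) (l l' : List ℕ)
    (hl : IsPermList n l) (hmove : IsMonotoneBlockMove l l') :
    invGap l ≤ invGap l' + 2 :=
  monotone_block_move_invGap_general l l' hmove
end

section
/- The minimum number of monotone block moves needed to sort a permutation π to the identity is at least max(bp(π)/3, des(π), gap(π)/2, des(π⁻¹), gap(π⁻¹)/2). -/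
/-!
Each of the five statistics vanishes at the identity and decreases by at most `3, 1, 2, 1, 2`
under a single monotone block move `A B C D ↦ A C B D`. Such a move destroys only the three
adjacencies at the block boundaries; the one between `B` and `C` is always a descent and never
a gap, and monotonicity turns a descent into `B` or out of `C` into a descent into `C` or out of
`B`. On the inverse side, the relative order of two values changes only if one lies in `B` and
the other in `C`: a lost inverse descent has `v + 1 ∈ B`, `v ∈ C`, which by monotonicity
determines `v`, and a lost inverse gap needs `v` to end `A` or `B`.
-/

open scoped Finset

def adjPairs (l : List ℕ) : List (ℕ × ℕ) := l.zip l.tail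

lemma adjPairs_append {X Y : List ℕ} (hX : X ≠ []) (hY : Y ≠ []) :
    adjPairs (X ++ Y) = adjPairs X ++ (X.getLast hX, Y.head hY) :: adjPairs Y := by
  induction X with
  | nil => exact absurd rfl hX
  | cons a X ih =>
    cases X with
    | nil => cases Y with
      | nil => exact absurd rfl hY
      | cons b Y => rfl
    | cons a' X =>
      have ih := ih (List.cons_ne_nil a' X)
      simp only [adjPairs, List.cons_append, List.tail_cons, List.zip_cons_cons] at ih ⊢
      rw [ih, List.getLast_cons (List.cons_ne_nil a' X)]

def pairCount (p : ℕ → ℕ → Bool) (l : List ℕ) : ℕ :=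
  (adjPairs l).countP fun q => p q.1 q.2

lemma pairCount_append (p : ℕ → ℕ → Bool) {X Y : List ℕ} (hX : X ≠ []) (hY : Y ≠ []) :
    pairCount p (X ++ Y) =
      pairCount p X + (p (X.getLast hX) (Y.head hY)).toNat + pairCount p Y := by
  simp only [pairCount, adjPairs_append hX hY, List.countP_append, List.countP_cons]
  cases p (X.getLast hX) (Y.head hY) <;>
    simp only [Bool.toNat_true, Bool.toNat_false, if_true, Bool.false_eq_true, if_false] <;> omega

lemma adjCount_eq_pairCount (p : ℕ → ℕ → Bool) (n : ℕ) (l : List ℕ) :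
    adjCount p n l = pairCount p (ext n l) := rfl

lemma adjPairs_range (m : ℕ) : ∀ q ∈ adjPairs (List.range m), q.2 = q.1 + 1 := by
  intro q hq
  obtain ⟨i, hi, rfl⟩ := List.mem_iff_getElem.1 hq
  simp [adjPairs, Nat.add_comm]

lemma ext_idL (n : ℕ) : ext n (idL n) = List.range (n + 2) := by
  rw [List.range_succ_eq_map, List.range_succ]
  simp [ext, idL]

lemma adjCount_idL (p : ℕ → ℕ → Bool) (n : ℕ) (hp : ∀ a, p a (a + 1) = false) :
    adjCount p n (idL n) = 0 := by
  rw [adjCount_eq_pairCount, ext_idL, pairCount, List.countP_eq_zero]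
  intro q hq
  simp [adjPairs_range _ q hq, hp]

section BlockMoveAdjacencies

variable (p : ℕ → ℕ → Bool) (n : ℕ) {A B C D : List ℕ} (hB : B ≠ []) (hC : C ≠ [])

lemma adjCount_blockMove :
    adjCount p n (A ++ B ++ C ++ D) =
      pairCount p (0 :: A) + (p (A.getLastD 0) (B.head hB)).toNat + pairCount p B +
        (p (B.getLast hB) (C.head hC)).toNat + pairCount p C +
        (p (C.getLast hC) (D.headD (n + 1))).toNat + pairCount p (D ++ [n + 1]) := by
  have hD : (D ++ [n + 1]).head (by simp) = D.headD (n + 1) := by cases D <;> rfl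
  have hCD : C ++ (D ++ [n + 1]) ≠ [] := by simp
  have hBCD : B ++ (C ++ (D ++ [n + 1])) ≠ [] := by simp
  rw [adjCount_eq_pairCount, show ext n (A ++ B ++ C ++ D) =
      (0 :: A) ++ (B ++ (C ++ (D ++ [n + 1]))) by simp [ext],
    pairCount_append p (List.cons_ne_nil 0 A) hBCD, pairCount_append p hB hCD,
    pairCount_append p hC (by simp), List.head_append_of_ne_nil hB,
    List.head_append_of_ne_nil hC, List.getLast_eq_getLastD, hD]
  omega

lemma adjCount_le_of_blockMove (k : ℕ)
    -- `a` and `q` are the neighbours of `B ++ C`, possibly the sentinels `0` and `n + 1`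
    (hk : ∀ a q, (p a (B.head hB)).toNat + (p (B.getLast hB) (C.head hC)).toNat +
        (p (C.getLast hC) q).toNat ≤
      (p a (C.head hC)).toNat + (p (C.getLast hC) (B.head hB)).toNat +
        (p (B.getLast hB) q).toNat + k) :
    adjCount p n (A ++ B ++ C ++ D) ≤ adjCount p n (A ++ C ++ B ++ D) + k := by
  have := hk (A.getLastD 0) (D.headD (n + 1))
  rw [adjCount_blockMove p n hB hC, adjCount_blockMove p n hC hB]
  omega

end BlockMoveAdjacencies

lemma IsMonotoneBlockMove.isBlockMove {l l' : List ℕ} (h : IsMonotoneBlockMove l l') :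
    IsBlockMove l l' :=
  let ⟨A, B, C, D, hB, hC, _, hl, hl'⟩ := h
  ⟨A, B, C, D, hB, hC, hl, hl'⟩

lemma IsBlockMove.bp_le {l l' : List ℕ} (n : ℕ) (h : IsBlockMove l l') :
    bp n l ≤ bp n l' + 3 := by
  obtain ⟨A, B, C, D, hB, hC, rfl, rfl⟩ := h
  refine adjCount_le_of_blockMove _ n hB hC 3 fun a q => ?_
  simp only [Bool.toNat, Bool.cond_decide]
  split_ifs <;> omega

lemma IsMonotoneBlockMove.des_le {l l' : List ℕ} (n : ℕ) (h : IsMonotoneBlockMove l l') :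
    des n l ≤ des n l' + 1 := by
  obtain ⟨A, B, C, D, hB, hC, hBC, rfl, rfl⟩ := h
  refine adjCount_le_of_blockMove _ n hB hC 1 fun a q => ?_
  have hhead := hBC _ (List.head_mem hB) _ (List.head_mem hC)
  have hlast := hBC _ (List.getLast_mem hB) _ (List.getLast_mem hC)
  simp only [Bool.toNat, Bool.cond_decide]
  split_ifs <;> omega

lemma IsMonotoneBlockMove.gap_le {l l' : List ℕ} (n : ℕ) (h : IsMonotoneBlockMove l l') :
    gap n l ≤ gap n l' + 2 := by
  obtain ⟨A, B, C, D, hB, hC, hBC, rfl, rfl⟩ := h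
  refine adjCount_le_of_blockMove _ n hB hC 2 fun a q => ?_
  have hmid := hBC _ (List.getLast_mem hB) _ (List.head_mem hC)
  simp only [Bool.toNat, Bool.cond_decide]
  split_ifs <;> omega

lemma card_filter_get_pairs {l : List ℕ} (hl : l.Nodup) (R : ℕ → ℕ → Prop)
    [DecidableRel R] :
    #{p : Fin l.length × Fin l.length | R p.1 p.2 ∧ l.get p.1 = l.get p.2 + 1} =
      #{v ∈ l.toFinset | v + 1 ∈ l ∧ R (l.idxOf (v + 1)) (l.idxOf v)} := by
  refine Finset.card_bij' (fun p _ => l.get p.2)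
    (fun v hv => (⟨l.idxOf (v + 1), List.idxOf_lt_length_iff.2 (Finset.mem_filter.1 hv).2.1⟩,
      ⟨l.idxOf v, List.idxOf_lt_length_iff.2 (List.mem_toFinset.1 (Finset.mem_filter.1 hv).1)⟩))
    ?_ ?_ ?_ ?_
  · rintro ⟨i, j⟩ hp
    obtain ⟨hR, hij⟩ := (Finset.mem_filter.1 hp).2
    simp only [Finset.mem_filter, List.mem_toFinset, ← hij, List.get_idxOf hl]
    exact ⟨l.get_mem j, l.get_mem i, hR⟩
  · intro v hv
    simpa [List.idxOf_get] using (Finset.mem_filter.1 hv).2.2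
  · rintro ⟨i, j⟩ hp
    obtain ⟨-, hij⟩ := (Finset.mem_filter.1 hp).2
    simp only [← hij, List.get_idxOf hl]
  · intro v _
    exact List.idxOf_get _

lemma invDes_eq_card {l : List ℕ} (hl : l.Nodup) :
    invDes l = #{v ∈ l.toFinset | v + 1 ∈ l ∧ l.idxOf (v + 1) < l.idxOf v} :=
  card_filter_get_pairs hl (· < ·)

lemma invGap_eq_card {l : List ℕ} (hl : l.Nodup) :
    invGap l = #{v ∈ l.toFinset | v + 1 ∈ l ∧ l.idxOf v + 1 < l.idxOf (v + 1)} :=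
  card_filter_get_pairs hl fun i j => j + 1 < i

lemma nodup_idL (n : ℕ) : (idL n).Nodup :=
  List.nodup_range.map fun _ _ => Nat.succ.inj

lemma get_idL (n : ℕ) (i : Fin (idL n).length) : (idL n).get i = i + 1 := by
  rw [List.get_eq_getElem]
  simp [idL]

lemma invDes_idL (n : ℕ) : invDes (idL n) = 0 := by
  simp only [invDes, Finset.card_eq_zero, Finset.filter_eq_empty_iff, get_idL]
  omega

lemma invGap_idL (n : ℕ) : invGap (idL n) = 0 := by
  simp only [invGap, Finset.card_eq_zero, Finset.filter_eq_empty_iff, get_idL]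
  omega

section BlockMovePositions

lemma perm_blockMove (A B C D : List ℕ) : (A ++ B ++ C ++ D).Perm (A ++ C ++ B ++ D) := by
  simpa only [List.append_assoc] using (List.perm_append_comm.append_right D).append_left A

lemma IsBlockMove.perm {l l' : List ℕ} (h : IsBlockMove l l') : l.Perm l' := by
  obtain ⟨A, B, C, D, -, -, rfl, rfl⟩ := h
  exact perm_blockMove A B C D

lemma idxOf_append_of_nodup_of_mem {X Y : List ℕ} {x : ℕ} (h : (X ++ Y).Nodup) (hx : x ∈ Y) :
    (X ++ Y).idxOf x = X.length + Y.idxOf x :=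
  List.idxOf_append_of_notMem fun hX => List.disjoint_of_nodup_append h hX hx

variable {A B C D : List ℕ}

lemma idxOf_blockMove_cases (hnd : (A ++ B ++ C ++ D).Nodup) {x : ℕ}
    (hx : x ∈ A ++ B ++ C ++ D) :
    let i := (A ++ B ++ C ++ D).idxOf x
    let i' := (A ++ C ++ B ++ D).idxOf x
    (x ∈ A ∧ i' = i ∧ i < A.length) ∨
    (x ∈ B ∧ i' = i + C.length ∧ A.length ≤ i ∧ i < A.length + B.length) ∨
    (x ∈ C ∧ i = i' + B.length ∧ A.length ≤ i' ∧ i' < A.length + C.length) ∨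
    (x ∈ D ∧ i' = i ∧ A.length + B.length + C.length ≤ i) := by
  have hnd' := (perm_blockMove A B C D).nodup_iff.1 hnd
  simp only [List.append_assoc] at hnd hnd' ⊢
  simp only [List.mem_append, or_assoc] at hx
  rcases hx with hx | hx | hx | hx
  · left
    simp only [List.idxOf_append_of_mem hx, List.idxOf_lt_length_iff.2 hx, hx, and_self]
  · right; left
    rw [idxOf_append_of_nodup_of_mem hnd (by simp [hx]), List.idxOf_append_of_mem hx,
      ← List.append_assoc, idxOf_append_of_nodup_of_mem (by simpa using hnd') (by simp [hx]),
      List.idxOf_append_of_mem hx, List.length_append]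
    exact ⟨hx, by have := List.idxOf_lt_length_iff.2 hx; omega⟩
  · right; right; left
    rw [idxOf_append_of_nodup_of_mem hnd' (by simp [hx]), List.idxOf_append_of_mem hx,
      ← List.append_assoc, idxOf_append_of_nodup_of_mem (by simpa using hnd) (by simp [hx]),
      List.idxOf_append_of_mem hx, List.length_append]
    exact ⟨hx, by have := List.idxOf_lt_length_iff.2 hx; omega⟩
  · right; right; right
    rw [show A ++ (B ++ (C ++ D)) = A ++ B ++ C ++ D by simp,
      show A ++ (C ++ (B ++ D)) = A ++ C ++ B ++ D by simp,
      idxOf_append_of_nodup_of_mem (by simpa using hnd') hx,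
      idxOf_append_of_nodup_of_mem (by simpa using hnd) hx]
    simp only [List.length_append]
    exact ⟨hx, by omega, by omega⟩

lemma mem_of_idxOf_lt_of_idxOf_blockMove_le (hnd : (A ++ B ++ C ++ D).Nodup) {x y : ℕ}
    (hx : x ∈ A ++ B ++ C ++ D) (hy : y ∈ A ++ B ++ C ++ D)
    (hlt : (A ++ B ++ C ++ D).idxOf x < (A ++ B ++ C ++ D).idxOf y)
    (hle : (A ++ C ++ B ++ D).idxOf y ≤ (A ++ C ++ B ++ D).idxOf x) :
    x ∈ B ∧ y ∈ C := by
  obtain hx | hx | hx | hx := idxOf_blockMove_cases hnd hx <;>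
  obtain hy | hy | hy | hy := idxOf_blockMove_cases hnd hy <;>
  first | exact ⟨hx.1, hy.1⟩ | omega

lemma idxOf_add_one_eq_of_idxOf_blockMove_le (hnd : (A ++ B ++ C ++ D).Nodup) {x y : ℕ}
    (hx : x ∈ A ++ B ++ C ++ D) (hy : y ∈ A ++ B ++ C ++ D) (hxy : ¬(x ∈ B ∧ y ∈ C))
    (hlt : (A ++ B ++ C ++ D).idxOf x + 1 < (A ++ B ++ C ++ D).idxOf y)
    (hle : (A ++ C ++ B ++ D).idxOf y ≤ (A ++ C ++ B ++ D).idxOf x + 1) :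
    (A ++ B ++ C ++ D).idxOf x + 1 = A.length ∨
      (A ++ B ++ C ++ D).idxOf x + 1 = A.length + B.length := by
  obtain hx | hx | hx | hx := idxOf_blockMove_cases hnd hx <;>
  obtain hy | hy | hy | hy := idxOf_blockMove_cases hnd hy <;>
  first | omega | exact absurd ⟨hx.1, hy.1⟩ hxy

end BlockMovePositions

lemma Finset.card_filter_le_card_filter_add {α : Type*} (s : Finset α) (P Q : α → Prop)
    [DecidablePred P] [DecidablePred Q] :
    #{v ∈ s | P v} ≤ #{v ∈ s | Q v} + #{v ∈ s | P v ∧ ¬Q v} := by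
  rw [← Finset.card_filter_add_card_filter_not (s := {v ∈ s | P v}) Q, Finset.filter_filter,
    Finset.filter_filter]
  gcongr with v
  exact And.right

lemma IsMonotoneBlockMove.invDes_le {l l' : List ℕ} (hl : l.Nodup)
    (h : IsMonotoneBlockMove l l') :
    invDes l ≤ invDes l' + 1 := by
  obtain ⟨A, B, C, D, -, -, hBC, rfl, rfl⟩ := h
  have hperm := perm_blockMove A B C D
  rw [invDes_eq_card hl, invDes_eq_card (hperm.nodup_iff.1 hl),
    List.toFinset_eq_of_perm _ _ hperm]
  refine (Finset.card_filter_le_card_filter_add _ _ _).trans (Nat.add_le_add_left ?_ _)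
  refine Finset.card_le_one.2 ?_
  simp only [Finset.mem_filter, List.mem_toFinset, not_and, not_lt]
  rintro v ⟨hv, ⟨hv1, hlt⟩, hle⟩ w ⟨hw, ⟨hw1, hlt'⟩, hle'⟩
  obtain ⟨hv1B, hvC⟩ := mem_of_idxOf_lt_of_idxOf_blockMove_le hl hv1 (hperm.mem_iff.2 hv) hlt
    (hle (hperm.mem_iff.1 hv1))
  obtain ⟨hw1B, hwC⟩ := mem_of_idxOf_lt_of_idxOf_blockMove_le hl hw1 (hperm.mem_iff.2 hw) hlt'
    (hle' (hperm.mem_iff.1 hw1))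
  have := hBC _ hv1B _ hwC
  have := hBC _ hw1B _ hvC
  omega

lemma IsMonotoneBlockMove.invGap_le {l l' : List ℕ} (hl : l.Nodup)
    (h : IsMonotoneBlockMove l l') :
    invGap l ≤ invGap l' + 2 := by
  obtain ⟨A, B, C, D, -, -, hBC, rfl, rfl⟩ := h
  have hperm := perm_blockMove A B C D
  rw [invGap_eq_card hl, invGap_eq_card (hperm.nodup_iff.1 hl),
    List.toFinset_eq_of_perm _ _ hperm]
  refine (Finset.card_filter_le_card_filter_add _ _ _).trans (Nat.add_le_add_left ?_ _)
  refine (Finset.card_le_card_of_injOn (fun v => (A ++ B ++ C ++ D).idxOf v + 1)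
    (t := {A.length, A.length + B.length}) ?_ ?_).trans Finset.card_le_two
  · intro v hv
    simp only [Finset.coe_filter, List.mem_toFinset, not_and, not_lt, Set.mem_ofPred_eq] at hv
    obtain ⟨hv, ⟨hv1, hlt⟩, hle⟩ := hv
    have hBC' : ¬(v ∈ B ∧ v + 1 ∈ C) := fun ⟨hvB, hv1C⟩ => by
      have := hBC _ hvB _ hv1C
      omega
    simpa using idxOf_add_one_eq_of_idxOf_blockMove_le hl (hperm.mem_iff.2 hv) hv1 hBC' hlt
      (hle (hperm.mem_iff.1 hv1))
  · intro v hv w _ hvw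
    simp only [Finset.coe_filter, List.mem_toFinset, Set.mem_ofPred_eq] at hv
    exact (List.idxOf_inj (hperm.mem_iff.2 hv.1)).1 (Nat.succ.inj hvw)

lemma SortsIn.le_add_mul {R : List ℕ → List ℕ → Prop} {P : List ℕ → Prop} (f : List ℕ → ℕ)
    (k : ℕ) (hP : ∀ ⦃l l'⦄, P l → R l l' → P l')
    (hf : ∀ ⦃l l'⦄, P l → R l l' → f l ≤ f l' + k)
    {l target : List ℕ} {t : ℕ} (hl : P l) (h : SortsIn R l target t) :
    f l ≤ f target + k * t := by
  induction t generalizing l with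
  | zero =>
    obtain ⟨c, rfl, rfl, -⟩ := h
    simp
  | succ t ih =>
    obtain ⟨c, rfl, hct, hc⟩ := h
    have hstep := hc 0 t.succ_pos
    have hrest := ih (hP hl hstep)
      ⟨fun i => c (i + 1), rfl, hct, fun i hi => hc (i + 1) (by omega)⟩
    have := hf hl hstep
    rw [Nat.mul_succ]
    omega

/-- Lower bound: any sorting of `π` by `t` monotone block moves satisfies
`t ≥ max(bp(π)/3, des(π), gap(π)/2, des(π⁻¹), gap(π⁻¹)/2)`, where inverse
descents/gaps of `π` are the descents/gaps of `π⁻¹`. -/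
theorem monotone_sorting_lower_bound (n : ℕ) (l : List ℕ)
    (hl : IsPermList n l) (t : ℕ)
    (hsort : SortsIn IsMonotoneBlockMove l (idL n) t) :
    bp n l ≤ 3 * t ∧ des n l ≤ t ∧ gap n l ≤ 2 * t ∧
      invDes l ≤ t ∧ invGap l ≤ 2 * t := by
  have bound := fun f k hf => hsort.le_add_mul f k
    (fun _ _ hnd h => h.isBlockMove.perm.nodup_iff.1 hnd) hf (hl.nodup_iff.2 (nodup_idL n))
  refine ⟨?_, ?_, ?_, ?_, ?_⟩
  · simpa [bp, adjCount_idL] using bound (bp n) 3 fun _ _ _ h => h.isBlockMove.bp_le n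
  · simpa [des, adjCount_idL] using bound (des n) 1 fun _ _ _ h => h.des_le n
  · simpa [gap, adjCount_idL] using bound (gap n) 2 fun _ _ _ h => h.gap_le n
  · simpa [invDes_idL] using bound invDes 1 fun _ _ hnd h => h.invDes_le hnd
  · simpa [invGap_idL] using bound invGap 2 fun _ _ hnd h => h.invGap_le hnd
end

section
/- If σ is a single-element block move applied to a permutation π (i.e., a block move in which one of the two exchanged blocks has size one), then lis(σπ) ≤ lis(π) + 1, where lis denotes the length of the longest increasing subsequence. -/
/-! Moving one element `x` of `π` is the same as deleting it and reinserting it elsewhere.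
Deleting an element can only shrink `lis`, and inserting one can raise it by at most one, since an
increasing subsequence of the new list loses at most the entry `x` when restricted to the rest. -/

lemma lis_le {l : List ℕ} {m : ℕ}
    (h : ∀ s, s.Sublist l → List.IsChain (· < ·) s → s.length ≤ m) : lis l ≤ m := by
  refine List.max_le_of_forall_le _ _ fun x hx => ?_
  simp only [List.mem_map, List.mem_filter, List.mem_sublists, decide_eq_true_eq] at hx
  obtain ⟨s, ⟨hs, hc⟩, rfl⟩ := hx
  exact h s hs hc

lemma le_lis {l s : List ℕ} (hs : s.Sublist l) (hc : List.IsChain (· < ·) s) :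
    s.length ≤ lis l :=
  List.le_max_of_le (by simpa using ⟨s, ⟨hs, hc⟩, rfl⟩) le_rfl

lemma lis_mono {l₁ l₂ : List ℕ} (h : l₁.Sublist l₂) : lis l₁ ≤ lis l₂ :=
  lis_le fun _ hs hc => le_lis (hs.trans h) hc

lemma lis_append_cons_le (X : List ℕ) (x : ℕ) (Y : List ℕ) :
    lis (X ++ x :: Y) ≤ lis (X ++ Y) + 1 := by
  refine lis_le fun s hs hc => ?_
  obtain ⟨s₁, s₂, rfl, h₁, h₂⟩ := List.sublist_append_iff.mp hs
  rcases List.sublist_cons_iff.mp h₂ with h₂ | ⟨r, rfl, hr⟩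
  · have := le_lis (h₁.append h₂) hc
    omega
  · have hc' : List.IsChain (· < ·) (s₁ ++ r) :=
      hc.sublist ((List.sublist_cons_self x r).append_left s₁)
    have := le_lis (h₁.append hr) hc'
    simp only [List.length_append, List.length_cons] at *
    omega

lemma IsSingleBlockMove.exists_eq_append_cons {l l' : List ℕ} (h : IsSingleBlockMove l l') :
    ∃ X x Y, l' = X ++ x :: Y ∧ (X ++ Y).Sublist l := by
  obtain ⟨A, B, C, D, -, -, hlen | hlen, rfl, rfl⟩ := h
  · obtain ⟨b, rfl⟩ := List.length_eq_one_iff.mp hlen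
    exact ⟨A ++ C, b, D, by simp, by simp⟩
  · obtain ⟨c, rfl⟩ := List.length_eq_one_iff.mp hlen
    exact ⟨A, c, B ++ D, by simp, by simp⟩

theorem single_block_move_lis_general (l l' : List ℕ)
    (hmove : IsSingleBlockMove l l') :
    lis l' ≤ lis l + 1 := by
  obtain ⟨X, x, Y, rfl, hsub⟩ := hmove.exists_eq_append_cons
  exact (lis_append_cons_le X x Y).trans (Nat.add_le_add_right (lis_mono hsub) 1)

/-- A single-element block move increases the length of the longest
increasing subsequence by at most one. -/
theorem single_block_move_lis (n : ℕ) (l l' : List ℕ)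
    (hl : IsPermList n l) (hmove : IsSingleBlockMove l l') :
    lis l' ≤ lis l + 1 :=
  single_block_move_lis_general l l' hmove
end

section
/- Let s_{ij} ∈ {0,1} for 1 ≤ i ≤ n, 1 ≤ j ≤ m, with row sums l_i = Σ_j s_{ij} and column sums r_j = Σ_i s_{ij}. Assume l₁ ≥ l_i for all i and l₁ ≥ r_j for all j. Let s = Σ_{i,j} s_{ij}, b = s − l₁, and I = s² − Σ_i l_i² − Σ_j r_j² + Σ_{i,j} s_{ij}². Then b² ≤ I. -/
/-! Since `b = S - l₁`, the claim is `Σ lᵢ² + Σ rⱼ² ≤ 2 l₁ S - l₁² + S`, using `Σ sᵢⱼ² = S`.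
The rows give `Σ lᵢ² ≤ l₁ Σ lᵢ = l₁ S` because `0 ≤ lᵢ ≤ l₁`. A column of sum `rⱼ ≤ l₁` whose
first-row entry is `t ∈ {0, 1}` gives `rⱼ² - rⱼ ≤ l₁ (rⱼ - t)`, and these bounds sum to
`l₁ (S - l₁)`. -/

section OrderedRing

open Finset

variable {ι R : Type*}

theorem sum_sq_le_mul_sum [Semiring R] [PartialOrder R] [IsOrderedRing R]
    (t : Finset ι) {f : ι → R} {M : R} (hf₀ : ∀ i ∈ t, 0 ≤ f i) (hfM : ∀ i ∈ t, f i ≤ M) :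
    ∑ i ∈ t, f i ^ 2 ≤ M * ∑ i ∈ t, f i := by
  rw [mul_sum]
  exact sum_le_sum fun i hi => by
    rw [sq]; exact mul_le_mul_of_nonneg_right (hfM i hi) (hf₀ i hi)

variable [CommRing R] [LinearOrder R] [IsStrictOrderedRing R]

-- `(M - r) (r - t) ≥ 0` and `r t ≤ r`.
theorem sq_sub_self_le_mul_sub {r t M : R} (ht₀ : 0 ≤ t) (ht₁ : t ≤ 1) (htr : t ≤ r)
    (hrM : r ≤ M) : r ^ 2 - r ≤ M * (r - t) := by
  nlinarith [mul_nonneg (sub_nonneg.2 hrM) (sub_nonneg.2 htr)]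

variable {κ : Type*} [Fintype ι] [Fintype κ] {s : ι → κ → R}

theorem sum_sq_colSum_sub_sum_le (hs₀ : ∀ i j, 0 ≤ s i j) (hs₁ : ∀ i j, s i j ≤ 1) (i₀ : ι)
    {M : R} (hcol : ∀ j, ∑ i, s i j ≤ M) :
    ∑ j, (∑ i, s i j) ^ 2 - ∑ i, ∑ j, s i j ≤ M * (∑ i, ∑ j, s i j - ∑ j, s i₀ j) := by
  have hentry_le_col : ∀ j, s i₀ j ≤ ∑ i, s i j := fun j =>
    single_le_sum (f := fun i => s i j) (fun i _ => hs₀ i j) (mem_univ i₀)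
  calc ∑ j, (∑ i, s i j) ^ 2 - ∑ i, ∑ j, s i j
      = ∑ j, ((∑ i, s i j) ^ 2 - ∑ i, s i j) := by rw [sum_sub_distrib, sum_comm]
    _ ≤ ∑ j, M * (∑ i, s i j - s i₀ j) := sum_le_sum fun j _ =>
        sq_sub_self_le_mul_sub (hs₀ i₀ j) (hs₁ i₀ j) (hentry_le_col j) (hcol j)
    _ = M * (∑ i, ∑ j, s i j - ∑ j, s i₀ j) := by rw [← mul_sum, sum_sub_distrib, sum_comm]

end OrderedRing

open Finset in
/-- Matrix lemma: for a 0-1 matrix whose first row sum `l₁` dominates all row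
and column sums, with `s` the total sum, `b = s - l₁`, and
`I = s² − Σᵢ lᵢ² − Σⱼ rⱼ² + Σᵢⱼ sᵢⱼ²`, we have `b² ≤ I`. -/
theorem matrix_lemma (n m : ℕ) (s : Fin (n + 1) → Fin m → ℤ)
    (h01 : ∀ i j, s i j = 0 ∨ s i j = 1)
    (l : Fin (n + 1) → ℤ) (hl : ∀ i, l i = ∑ j, s i j)
    (r : Fin m → ℤ) (hr : ∀ j, r j = ∑ i, s i j)
    (hrow : ∀ i, l i ≤ l 0) (hcol : ∀ j, r j ≤ l 0)
    (S b I : ℤ) (hS : S = ∑ i, ∑ j, s i j) (hb : b = S - l 0)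
    (hI : I = S ^ 2 - (∑ i, (l i) ^ 2) - (∑ j, (r j) ^ 2) + ∑ i, ∑ j, (s i j) ^ 2) :
    b ^ 2 ≤ I := by
  obtain rfl : l = fun i => ∑ j, s i j := funext hl
  obtain rfl : r = fun j => ∑ i, s i j := funext hr
  subst hS hb hI
  have hs₀ : ∀ i j, 0 ≤ s i j := fun i j => by rcases h01 i j with h | h <;> simp [h]
  have hs₁ : ∀ i j, s i j ≤ 1 := fun i j => by rcases h01 i j with h | h <;> simp [h]
  have hsq : ∑ i, ∑ j, s i j ^ 2 = ∑ i, ∑ j, s i j :=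
    sum_congr rfl fun i _ => sum_congr rfl fun j _ => by rcases h01 i j with h | h <;> simp [h]
  have hrows := sum_sq_le_mul_sum univ (fun i _ => sum_nonneg fun j _ => hs₀ i j)
    (fun i _ => hrow i)
  have hcols := sum_sq_colSum_sub_sum_le hs₀ hs₁ 0 hcol
  rw [hsq]
  linarith
end
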